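/- Let h ∈ 𝓗, c := inf (h − dh(p∂_p)) > 0, and fix q₀,q₁ ∈ ℝ² and constants 𝔞, 𝔶, ε > 0. Then every (v,η) ∈ B_h(𝔞,𝔶,ε), with v = (q,p), satisfies ‖q‖_{L²([0,1])} ≤ min(|q₀|,|q₁|) + 2(3ε + 𝔞/√(2c) + 𝔶·sup_x‖dh_x‖) and sup_{t∈[0,1]}|q(t)| ≤ min(|q₀|,|q₁|) + 2(3ε + 𝔞/√(2c) + 𝔶·sup_x‖dh_x‖). -/

import Mathlib

open Set MeasureTheory

abbrev R2 : Type := ℝ × ℝ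
abbrev Phase : Type := R2 × R2

noncomputable section

def sq2 (a : R2) : ℝ := a.1 ^ 2 + a.2 ^ 2

/-- Euclidean norm on `ℝ²`. -/
def enorm2 (a : R2) : ℝ := Real.sqrt (sq2 a)

/-- Euclidean inner product on `ℝ²`. -/
def inner2 (a b : R2) : ℝ := a.1 * b.1 + a.2 * b.2

/-- The Copernican Hamiltonian `H₀(q,p) = (p₁² + p₂²)/2 + p₁q₂ − p₂q₁`. -/
def H0 (x : Phase) : ℝ :=
  (x.2.1 ^ 2 + x.2.2 ^ 2) / 2 + x.2.1 * x.1.2 - x.2.2 * x.1.1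

/-- The Hamiltonian vector field `X_H = (∂H/∂p₁, ∂H/∂p₂, −∂H/∂q₁, −∂H/∂q₂)`. -/
def XH (H : Phase → ℝ) (x : Phase) : Phase :=
  ((fderiv ℝ H x ((0, 0), (1, 0)), fderiv ℝ H x ((0, 0), (0, 1))),
   (-fderiv ℝ H x ((1, 0), (0, 0)), -fderiv ℝ H x ((0, 1), (0, 0))))

/-- `(v, v')` is a `W^{1,2}`-path from the fibre over `q0` to the fibre over `q1`:
`v` has derivative `v'` on `[0,1]` and `v' ∈ L²([0,1])`. -/
def IsPath (q0 q1 : R2) (v v' : ℝ → Phase) : Prop :=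
  (v 0).1 = q0 ∧ (v 1).1 = q1 ∧
  (∀ t ∈ Icc (0:ℝ) 1, HasDerivWithinAt v (v' t) (Icc (0:ℝ) 1) t) ∧
  IntervalIntegrable (fun t => sq2 (v' t).1 + sq2 (v' t).2) volume 0 1

/-- The Rabinowitz action functional `𝒜(v,η) = ∫₀¹⟨p,q'⟩ − η∫₀¹H(v)`. -/
def action (H : Phase → ℝ) (v v' : ℝ → Phase) (η : ℝ) : ℝ :=
  (∫ t in (0:ℝ)..1, inner2 (v t).2 (v' t).1) - η * ∫ t in (0:ℝ)..1, H (v t)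

/-- Square of the L²-gradient norm of the Rabinowitz action functional:
`∫₀¹|v' − η X_H(v)|² + (∫₀¹ H(v))²`. -/
def gradSq (H : Phase → ℝ) (v v' : ℝ → Phase) (η : ℝ) : ℝ :=
  (∫ t in (0:ℝ)..1,
      sq2 ((v' t).1 - η • (XH H (v t)).1) + sq2 ((v' t).2 - η • (XH H (v t)).2))
    + (∫ t in (0:ℝ)..1, H (v t)) ^ 2

/-- Euclidean norm `‖dh_x‖ = |∇h(x)|` of the differential of `h` at `x`. -/
def gnorm (h : Phase → ℝ) (x : Phase) : ℝ :=
  Real.sqrt ((fderiv ℝ h x ((1, 0), (0, 0))) ^ 2 + (fderiv ℝ h x ((0, 1), (0, 0))) ^ 2 +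
    (fderiv ℝ h x ((0, 0), (1, 0))) ^ 2 + (fderiv ℝ h x ((0, 0), (0, 1))) ^ 2)

/-- Membership in the set `B_h(𝔞,𝔶,ε)` of infinitesimally small action derivation:
`‖∇𝒜(v,η)‖ < ε`, `|𝒜(v,η)| ≤ 𝔞` and `|η| ≤ 𝔶`. -/
def memB (h : Phase → ℝ) (q0 q1 : R2) (A Y ε : ℝ) (v v' : ℝ → Phase) (η : ℝ) : Prop :=
  IsPath q0 q1 v v' ∧
  Real.sqrt (gradSq (fun x => H0 x - h x) v v' η) < ε ∧
  |action (fun x => H0 x - h x) v v' η| ≤ A ∧ |η| ≤ Y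

end

set_option maxHeartbeats 4000000

open Set MeasureTheory Filter

section AuxLemmas

lemma sq2_nonneg (a : R2) : 0 ≤ sq2 a := by unfold sq2; positivity

lemma enorm2_nonneg (a : R2) : 0 ≤ enorm2 a := Real.sqrt_nonneg _

lemma sq_enorm2 (a : R2) : enorm2 a ^ 2 = sq2 a := Real.sq_sqrt (sq2_nonneg a)

lemma enorm2_le_of (a : R2) (r : ℝ) (hr : 0 ≤ r) (h : sq2 a ≤ r ^ 2) : enorm2 a ≤ r := by
  rw [enorm2, show r = Real.sqrt (r^2) from (Real.sqrt_sq hr).symm]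
  exact Real.sqrt_le_sqrt h

lemma abs_inner2_le (a b : R2) : |inner2 a b| ≤ enorm2 a * enorm2 b := by
  have h2 : inner2 a b ^ 2 ≤ sq2 a * sq2 b := by
    unfold inner2 sq2; nlinarith [sq_nonneg (a.1*b.2 - a.2*b.1)]
  have h3 : |inner2 a b| = Real.sqrt (inner2 a b ^ 2) := (Real.sqrt_sq_eq_abs _).symm
  rw [h3, enorm2, enorm2, ← Real.sqrt_mul (sq2_nonneg a)]
  exact Real.sqrt_le_sqrt h2

lemma inner2_le (a b : R2) : inner2 a b ≤ enorm2 a * enorm2 b :=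
  (le_abs_self _).trans (abs_inner2_le a b)

lemma enorm2_mul_le_sq2 (a b : R2) : enorm2 a * enorm2 b ≤ (sq2 a + sq2 b) / 2 := by
  nlinarith [sq_nonneg (enorm2 a - enorm2 b), sq_enorm2 a, sq_enorm2 b]

lemma abs_inner2_le_sq2 (a b : R2) : |inner2 a b| ≤ (sq2 a + sq2 b) / 2 :=
  (abs_inner2_le a b).trans (enorm2_mul_le_sq2 a b)

lemma enorm2_add_le (a b : R2) : enorm2 (a + b) ≤ enorm2 a + enorm2 b := by
  apply enorm2_le_of _ _ (add_nonneg (enorm2_nonneg a) (enorm2_nonneg b))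
  have h := inner2_le a b
  have ha := sq_enorm2 a; have hb := sq_enorm2 b
  have : sq2 (a + b) = sq2 a + sq2 b + 2 * inner2 a b := by
    simp [sq2, inner2, Prod.fst_add, Prod.snd_add]; ring
  nlinarith [enorm2_nonneg a, enorm2_nonneg b]

lemma enorm2_smul (η : ℝ) (a : R2) : enorm2 (η • a) = |η| * enorm2 a := by
  have : sq2 (η • a) = η ^ 2 * sq2 a := by
    simp [sq2, Prod.smul_fst, Prod.smul_snd, smul_eq_mul]; ring
  rw [enorm2, this, Real.sqrt_mul (sq_nonneg η), Real.sqrt_sq_eq_abs, enorm2]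

lemma sq2_sub_le (a b : R2) : sq2 (a - b) ≤ 2 * sq2 a + 2 * sq2 b := by
  simp only [sq2, Prod.fst_sub, Prod.snd_sub]
  nlinarith [sq_nonneg (a.1 + b.1), sq_nonneg (a.2 + b.2)]

lemma sq2_smul (η : ℝ) (a : R2) : sq2 (η • a) = η ^ 2 * sq2 a := by
  simp [sq2, Prod.smul_fst, Prod.smul_snd, smul_eq_mul]; ring

lemma enorm2_le_half (a : R2) : enorm2 a ≤ (1 + sq2 a) / 2 := by
  nlinarith [sq_nonneg (enorm2 a - 1), sq_enorm2 a, enorm2_nonneg a]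

lemma enorm2_neg_pair (x y : ℝ) : enorm2 (-x, -y) = enorm2 (x, y) := by
  simp [enorm2, sq2]

lemma continuous_sq2 : Continuous sq2 := by
  unfold sq2; fun_prop

lemma continuous_enorm2 : Continuous enorm2 :=
  Real.continuous_sqrt.comp continuous_sq2

lemma sq2_pair_le_four (a b c d : ℝ) : sq2 (c, d) ≤ a^2 + b^2 + c^2 + d^2 := by
  simp only [sq2]
  nlinarith [sq_nonneg a, sq_nonneg b]

lemma sq2_rot_bound (x1 x2 y1 y2 e : ℝ) :
    sq2 (x1 - e*y2, x2 + e*y1) ≤ 2*sq2 (x1,x2) + (2*e^2)*sq2 (y1,y2) := by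
  simp only [sq2]
  nlinarith [sq_nonneg (x1 + e*y2), sq_nonneg (x2 - e*y1)]

lemma rot_sq2 (θ : ℝ) (b : R2) :
    sq2 (Real.cos θ * b.1 + Real.sin θ * b.2, -Real.sin θ * b.1 + Real.cos θ * b.2)
      = sq2 b := by
  simp only [sq2]
  linear_combination (b.1 ^ 2 + b.2 ^ 2) * (Real.sin_sq_add_cos_sq θ)

lemma aesm_v' (v v' : ℝ → Phase)
    (hd : ∀ t ∈ Icc (0:ℝ) 1, HasDerivWithinAt v (v' t) (Icc (0:ℝ) 1) t) :
    AEStronglyMeasurable v' (volume.restrict (Ioc (0:ℝ) 1)) := by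
  have key : ∀ t ∈ Ioo (0:ℝ) 1, v' t = deriv v t := by
    intro t ht
    exact (((hd t (Ioo_subset_Icc_self ht)).hasDerivAt
      (Icc_mem_nhds ht.1 ht.2)).deriv).symm
  have hae : v' =ᵐ[volume.restrict (Ioc (0:ℝ) 1)] deriv v := by
    rw [← Measure.restrict_congr_set Ioo_ae_eq_Ioc]
    exact (ae_restrict_iff' measurableSet_Ioo).mpr (.of_forall key)
  exact (stronglyMeasurable_deriv v).aestronglyMeasurable.congr hae.symm

lemma II_of_bound (f g : ℝ → ℝ)
    (hm : AEStronglyMeasurable f (volume.restrict (Ioc (0:ℝ) 1)))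
    (hg : IntervalIntegrable g volume 0 1)
    (hb : ∀ t ∈ Ioc (0:ℝ) 1, |f t| ≤ g t) :
    IntervalIntegrable f volume 0 1 := by
  rw [intervalIntegrable_iff_integrableOn_Ioc_of_le zero_le_one] at hg ⊢
  refine Integrable.mono' hg hm ?_
  exact (ae_restrict_iff' measurableSet_Ioc).mpr (.of_forall (fun t ht => by
    simpa [Real.norm_eq_abs] using hb t ht))

lemma II_of_contOn (f : ℝ → ℝ) (hf : ContinuousOn f (Icc (0:ℝ) 1)) :
    IntervalIntegrable f volume 0 1 := by
  apply ContinuousOn.intervalIntegrable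
  rwa [uIcc_of_le zero_le_one]

lemma aesm_of_contOn {E : Type*} [TopologicalSpace E] [TopologicalSpace.PseudoMetrizableSpace E]
    (f : ℝ → E) (hf : ContinuousOn f (Icc (0:ℝ) 1)) :
    AEStronglyMeasurable f (volume.restrict (Ioc (0:ℝ) 1)) :=
  (hf.mono Ioc_subset_Icc_self).aestronglyMeasurable measurableSet_Ioc

lemma integral_CS (f g : ℝ → ℝ)
    (hfg : IntervalIntegrable (fun t => f t * g t) volume 0 1)
    (hf2 : IntervalIntegrable (fun t => f t ^ 2) volume 0 1)
    (hg2 : IntervalIntegrable (fun t => g t ^ 2) volume 0 1) :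
    (∫ t in (0:ℝ)..1, f t * g t) ≤
      Real.sqrt (∫ t in (0:ℝ)..1, f t ^ 2) * Real.sqrt (∫ t in (0:ℝ)..1, g t ^ 2) := by
  set F := ∫ t in (0:ℝ)..1, f t ^ 2 with hF
  set G := ∫ t in (0:ℝ)..1, g t ^ 2 with hG
  have hF0 : 0 ≤ F := intervalIntegral.integral_nonneg zero_le_one (fun t _ => sq_nonneg _)
  have hG0 : 0 ≤ G := intervalIntegral.integral_nonneg zero_le_one (fun t _ => sq_nonneg _)
  have step : ∀ l : ℝ, 0 < l → (∫ t in (0:ℝ)..1, f t * g t) ≤ l / 2 * F + 1 / (2 * l) * G := by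
    intro l hl
    have hpt : ∀ t ∈ Icc (0:ℝ) 1, f t * g t ≤ l / 2 * f t ^ 2 + 1 / (2 * l) * g t ^ 2 := by
      intro t _
      have h1 : 0 ≤ (l * f t - g t) ^ 2 := sq_nonneg _
      have h2 : 0 < 2 * l := by linarith
      have h3 : l / 2 * f t ^ 2 + 1 / (2 * l) * g t ^ 2 - f t * g t
          = (l * f t - g t) ^ 2 / (2 * l) := by field_simp; ring
      have h4 := div_nonneg h1 (le_of_lt h2)
      linarith
    calc (∫ t in (0:ℝ)..1, f t * g t)
        ≤ ∫ t in (0:ℝ)..1, (l / 2 * f t ^ 2 + 1 / (2 * l) * g t ^ 2) := by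
          apply intervalIntegral.integral_mono_on zero_le_one hfg
          · exact (hf2.const_mul _).add (hg2.const_mul _)
          · exact hpt
      _ = l / 2 * F + 1 / (2 * l) * G := by
          rw [intervalIntegral.integral_add (hf2.const_mul _) (hg2.const_mul _),
            intervalIntegral.integral_const_mul, intervalIntegral.integral_const_mul]
  have key : ∀ δ : ℝ, 0 < δ →
      (∫ t in (0:ℝ)..1, f t * g t) ≤ Real.sqrt (F + δ) * Real.sqrt (G + δ) := by
    intro δ hδ
    set u := Real.sqrt (F + δ) with hu
    set w := Real.sqrt (G + δ) with hw
    have hu0 : 0 < u := Real.sqrt_pos.mpr (by linarith)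
    have hw0 : 0 < w := Real.sqrt_pos.mpr (by linarith)
    have hu2 : u ^ 2 = F + δ := Real.sq_sqrt (by linarith)
    have hw2 : w ^ 2 = G + δ := Real.sq_sqrt (by linarith)
    have hl : 0 < w / u := div_pos hw0 hu0
    calc (∫ t in (0:ℝ)..1, f t * g t) ≤ w / u / 2 * F + 1 / (2 * (w / u)) * G := step _ hl
      _ ≤ w / u / 2 * (F + δ) + 1 / (2 * (w / u)) * (G + δ) := by
          have h1 : 0 ≤ w / u / 2 := by positivity
          have h2 : 0 ≤ 1 / (2 * (w / u)) := by positivity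
          nlinarith
      _ = u * w := by
          rw [← hu2, ← hw2]; field_simp; ring
  have htend : Tendsto (fun δ : ℝ => Real.sqrt (F + δ) * Real.sqrt (G + δ))
      (nhdsWithin (0:ℝ) (Ioi 0)) (nhds (Real.sqrt F * Real.sqrt G)) := by
    have hc : Continuous (fun δ : ℝ => Real.sqrt (F + δ) * Real.sqrt (G + δ)) := by
      continuity
    have := hc.tendsto 0
    simp only [add_zero] at this
    exact this.mono_left nhdsWithin_le_nhds
  exact ge_of_tendsto htend (eventually_nhdsWithin_of_forall (fun δ hδ => key δ hδ))

lemma L1_le_L2 (f : ℝ → ℝ)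
    (hf1 : IntervalIntegrable f volume 0 1)
    (hf2 : IntervalIntegrable (fun t => f t ^ 2) volume 0 1) :
    (∫ t in (0:ℝ)..1, f t) ≤ Real.sqrt (∫ t in (0:ℝ)..1, f t ^ 2) := by
  have := integral_CS f (fun _ => 1) (by simpa using hf1) hf2 (by simpa using intervalIntegrable_const (c := (1:ℝ)))
  simpa using this

lemma enorm2_pair_integral_le (a b : ℝ) (hab : a ≤ b) (W1 W2 : ℝ → ℝ)
    (h1 : IntervalIntegrable W1 volume a b) (h2 : IntervalIntegrable W2 volume a b)
    (hn : IntervalIntegrable (fun s => enorm2 (W1 s, W2 s)) volume a b) :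
    enorm2 (∫ s in a..b, W1 s, ∫ s in a..b, W2 s)
      ≤ ∫ s in a..b, enorm2 (W1 s, W2 s) := by
  set I1 := ∫ s in a..b, W1 s
  set I2 := ∫ s in a..b, W2 s
  set R := enorm2 (I1, I2) with hR
  have hn0 : 0 ≤ ∫ s in a..b, enorm2 (W1 s, W2 s) :=
    intervalIntegral.integral_nonneg hab (fun s _ => enorm2_nonneg _)
  rcases eq_or_lt_of_le (enorm2_nonneg (I1, I2)) with h0 | hpos
  · rw [hR, ← h0]; exact hn0
  · have key : R ^ 2 ≤ R * ∫ s in a..b, enorm2 (W1 s, W2 s) := by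
      have e1 : R ^ 2 = I1 * I1 + I2 * I2 := by
        rw [sq_enorm2]; simp [sq2]; ring
      have e2 : I1 * I1 + I2 * I2 = ∫ s in a..b, (I1 * W1 s + I2 * W2 s) := by
        rw [intervalIntegral.integral_add (h1.const_mul _) (h2.const_mul _),
          intervalIntegral.integral_const_mul, intervalIntegral.integral_const_mul]
      have e3 : (∫ s in a..b, (I1 * W1 s + I2 * W2 s))
          ≤ ∫ s in a..b, R * enorm2 (W1 s, W2 s) := by
        apply intervalIntegral.integral_mono_on hab
          ((h1.const_mul _).add (h2.const_mul _)) (hn.const_mul _)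
        intro s _
        have := inner2_le (I1, I2) (W1 s, W2 s)
        simpa [inner2] using this
      rw [e1, e2]
      calc _ ≤ ∫ s in a..b, R * enorm2 (W1 s, W2 s) := e3
        _ = R * ∫ s in a..b, enorm2 (W1 s, W2 s) := intervalIntegral.integral_const_mul _ _
    nlinarith [key, hpos]

lemma ftc_aux (f W : ℝ → ℝ)
    (hder : ∀ s ∈ Icc (0:ℝ) 1, HasDerivWithinAt f (W s) (Icc (0:ℝ) 1) s)
    (hW : IntervalIntegrable W volume 0 1) (t : ℝ) (ht : t ∈ Icc (0:ℝ) 1) :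
    (∫ s in (0:ℝ)..t, W s) = f t - f 0 ∧ (∫ s in t..(1:ℝ), W s) = f 1 - f t := by
  have hcont : ContinuousOn f (Icc 0 1) := fun s hs => (hder s hs).continuousWithinAt
  constructor
  · apply intervalIntegral.integral_eq_sub_of_hasDeriv_right_of_le ht.1
      (hcont.mono (Icc_subset_Icc le_rfl ht.2))
    · intro s hs
      have hs1 : s ∈ Icc (0:ℝ) 1 := ⟨hs.1.le, (hs.2.trans_le ht.2).le⟩
      exact (((hder s hs1).hasDerivAt
        (Icc_mem_nhds hs.1 (hs.2.trans_le ht.2))).hasDerivWithinAt)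
    · exact hW.mono_set (by
        rw [uIcc_of_le ht.1, uIcc_of_le zero_le_one]
        exact Icc_subset_Icc le_rfl ht.2)
  · apply intervalIntegral.integral_eq_sub_of_hasDeriv_right_of_le ht.2
      (hcont.mono (Icc_subset_Icc ht.1 le_rfl))
    · intro s hs
      have hs1 : s ∈ Icc (0:ℝ) 1 := ⟨(ht.1.trans hs.1.le), hs.2.le⟩
      exact (((hder s hs1).hasDerivAt
        (Icc_mem_nhds (ht.1.trans_lt hs.1) hs.2)).hasDerivWithinAt)
    · exact hW.mono_set (by
        rw [uIcc_of_le ht.2, uIcc_of_le zero_le_one]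
        exact Icc_subset_Icc ht.1 le_rfl)

noncomputable def Pq1 : Phase →L[ℝ] ℝ :=
  (ContinuousLinearMap.fst ℝ ℝ ℝ).comp (ContinuousLinearMap.fst ℝ R2 R2)
noncomputable def Pq2 : Phase →L[ℝ] ℝ :=
  (ContinuousLinearMap.snd ℝ ℝ ℝ).comp (ContinuousLinearMap.fst ℝ R2 R2)
noncomputable def Pp1 : Phase →L[ℝ] ℝ :=
  (ContinuousLinearMap.fst ℝ ℝ ℝ).comp (ContinuousLinearMap.snd ℝ R2 R2)
noncomputable def Pp2 : Phase →L[ℝ] ℝ :=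
  (ContinuousLinearMap.snd ℝ ℝ ℝ).comp (ContinuousLinearMap.snd ℝ R2 R2)

lemma hasFDerivAt_H0 (x : Phase) :
    HasFDerivAt H0
      ((((x.2.1 • Pp1 + x.2.2 • Pp2) + (x.2.1 • Pq2 + x.1.2 • Pp1)) -
        (x.2.2 • Pq1 + x.1.1 • Pp2))) x := by
  have hq1 : HasFDerivAt (fun y : Phase => y.1.1) Pq1 x := Pq1.hasFDerivAt
  have hq2 : HasFDerivAt (fun y : Phase => y.1.2) Pq2 x := Pq2.hasFDerivAt
  have hp1 : HasFDerivAt (fun y : Phase => y.2.1) Pp1 x := Pp1.hasFDerivAt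
  have hp2 : HasFDerivAt (fun y : Phase => y.2.2) Pp2 x := Pp2.hasFDerivAt
  have h1 : HasFDerivAt (fun y : Phase => (y.2.1 ^ 2 + y.2.2 ^ 2) / 2)
      (x.2.1 • Pp1 + x.2.2 • Pp2) x := by
    have := ((hp1.mul hp1).add (hp2.mul hp2)).const_mul (1/2 : ℝ)
    refine (this.congr_of_eventuallyEq (Filter.Eventually.of_forall fun y => ?_)).congr_fderiv ?_
    · show (y.2.1 ^ 2 + y.2.2 ^ 2) / 2 = 1 / 2 * (y.2.1 * y.2.1 + y.2.2 * y.2.2); ring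
    · ext w <;> simp [Pp1, Pp2] <;> ring
  have h2 : HasFDerivAt (fun y : Phase => y.2.1 * y.1.2) (x.2.1 • Pq2 + x.1.2 • Pp1) x :=
    hp1.mul hq2
  have h3 : HasFDerivAt (fun y : Phase => y.2.2 * y.1.1) (x.2.2 • Pq1 + x.1.1 • Pp2) x :=
    hp2.mul hq1
  exact (h1.add h2).sub h3

lemma differentiableAt_H0 (x : Phase) : DifferentiableAt ℝ H0 x :=
  (hasFDerivAt_H0 x).differentiableAt

lemma fderiv_H0_apply (x w : Phase) :
    fderiv ℝ H0 x w =
      x.2.1 * w.2.1 + x.2.2 * w.2.2 + (x.2.1 * w.1.2 + x.1.2 * w.2.1)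
        - (x.2.2 * w.1.1 + x.1.1 * w.2.2) := by
  rw [(hasFDerivAt_H0 x).fderiv]
  simp [Pq1, Pq2, Pp1, Pp2]

end AuxLemmas


/-- For `h ∈ 𝓗`, `c := inf (h − dh(p∂ₚ)) > 0`, and `(v,η) ∈ B_h(𝔞,𝔶,ε)` with `v = (q,p)`:
`‖q‖_{L²} ≤ min(|q₀|,|q₁|) + 2(3ε + 𝔞/√(2c) + 𝔶·sup‖dh‖)` and the same bound for
`sup_{t∈[0,1]} |q(t)|`. -/
theorem stmt4 (h : Phase → ℝ) (hsm : ContDiff ℝ (⊤ : ℕ∞) h)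
    (hsupp : HasCompactSupport fun x => fderiv ℝ h x)
    (hpos : ∀ x, 0 < h x)
    (hLiou : ∀ x : Phase, 0 < h x - fderiv ℝ h x ((0, 0), x.2))
    (c : ℝ) (hc : c = sInf (Set.range fun x : Phase => h x - fderiv ℝ h x ((0, 0), x.2)))
    (hcpos : 0 < c)
    (q0 q1 : R2) (A Y ε : ℝ) (hA : 0 < A) (hY : 0 < Y) (hε : 0 < ε)
    (v v' : ℝ → Phase) (η : ℝ)
    (hB : memB h q0 q1 A Y ε v v' η) :
    Real.sqrt (∫ t in (0:ℝ)..1, sq2 (v t).1) ≤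
        min (enorm2 q0) (enorm2 q1) +
          2 * (3 * ε + A / Real.sqrt (2 * c) + Y * sSup (Set.range (gnorm h))) ∧
      ∀ t ∈ Icc (0:ℝ) 1,
        enorm2 (v t).1 ≤
          min (enorm2 q0) (enorm2 q1) +
            2 * (3 * ε + A / Real.sqrt (2 * c) + Y * sSup (Set.range (gnorm h))) := by
  obtain ⟨⟨hq0, hq1, hd, hL2⟩, hgrad, hact, hη⟩ := hB
  set Hf : Phase → ℝ := fun x => H0 x - h x with hHf
  have hdiffh : Differentiable ℝ h := hsm.differentiable (by simp)
  have hfc : Continuous (fun x => fderiv ℝ h x) := hsm.continuous_fderiv (by simp)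
  have hhc : Continuous h := hsm.continuous
  set d1 : Phase → ℝ := fun x => fderiv ℝ h x ((1,0),(0,0)) with hd1def
  set d2 : Phase → ℝ := fun x => fderiv ℝ h x ((0,1),(0,0)) with hd2def
  set d3 : Phase → ℝ := fun x => fderiv ℝ h x ((0,0),(1,0)) with hd3def
  set d4 : Phase → ℝ := fun x => fderiv ℝ h x ((0,0),(0,1)) with hd4def
  have hcd : ∀ w : Phase, Continuous (fun x => fderiv ℝ h x w) :=
    fun w => hfc.clm_apply continuous_const
  have hc1c : Continuous d1 := hcd _
  have hc2c : Continuous d2 := hcd _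
  have hc3c : Continuous d3 := hcd _
  have hc4c : Continuous d4 := hcd _
  have hfderivHf : ∀ (x w : Phase), fderiv ℝ Hf x w = fderiv ℝ H0 x w - fderiv ℝ h x w := by
    intro x w
    rw [hHf, fderiv_fun_sub (differentiableAt_H0 x) (hdiffh x)]
    rfl
  set F : Phase → Phase := fun x =>
    ((x.2.1 + x.1.2 - d3 x, x.2.2 - x.1.1 - d4 x), (x.2.2 + d1 x, -x.2.1 + d2 x)) with hFdef
  have hXHF : ∀ x, XH Hf x = F x := by
    intro x
    show ((fderiv ℝ Hf x ((0,0),(1,0)), fderiv ℝ Hf x ((0,0),(0,1))),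
      (-fderiv ℝ Hf x ((1,0),(0,0)), -fderiv ℝ Hf x ((0,1),(0,0)))) = F x
    rw [hfderivHf, hfderivHf, hfderivHf, hfderivHf, fderiv_H0_apply, fderiv_H0_apply,
      fderiv_H0_apply, fderiv_H0_apply]
    simp only [hFdef, hd1def, hd2def, hd3def, hd4def, Prod.mk.injEq]
    norm_num
    refine ⟨?_, ?_⟩ <;> ring
  have hFc : Continuous F := by
    rw [hFdef]
    refine Continuous.prodMk (Continuous.prodMk ?_ ?_) (Continuous.prodMk ?_ ?_)
    · exact ((continuous_fst.comp continuous_snd).add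
        (continuous_snd.comp continuous_fst)).sub hc3c
    · exact ((continuous_snd.comp continuous_snd).sub
        (continuous_fst.comp continuous_fst)).sub hc4c
    · exact (continuous_snd.comp continuous_snd).add hc1c
    · exact (continuous_fst.comp continuous_snd).neg.add hc2c
  have contv : ContinuousOn v (Icc 0 1) := fun u hu => (hd u hu).continuousWithinAt
  have contq : ContinuousOn (fun t => (v t).1) (Icc (0:ℝ) 1) :=
    continuous_fst.comp_continuousOn contv
  have contp : ContinuousOn (fun t => (v t).2) (Icc (0:ℝ) 1) :=
    continuous_snd.comp_continuousOn contv
  have contXHv : ContinuousOn (fun t => XH Hf (v t)) (Icc (0:ℝ) 1) := by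
    have he : (fun t => XH Hf (v t)) = fun t => F (v t) := funext fun t => hXHF (v t)
    rw [he]; exact hFc.comp_continuousOn contv
  have contXH1v : ContinuousOn (fun t => (XH Hf (v t)).1) (Icc (0:ℝ) 1) :=
    continuous_fst.comp_continuousOn contXHv
  have contXH2v : ContinuousOn (fun t => (XH Hf (v t)).2) (Icc (0:ℝ) 1) :=
    continuous_snd.comp_continuousOn contXHv
  -- measurability
  have hvm : AEStronglyMeasurable v' (volume.restrict (Ioc (0:ℝ) 1)) := aesm_v' v v' hd
  have hq'm : AEStronglyMeasurable (fun t => (v' t).1) (volume.restrict (Ioc (0:ℝ) 1)) :=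
    continuous_fst.comp_aestronglyMeasurable hvm
  have hp'm : AEStronglyMeasurable (fun t => (v' t).2) (volume.restrict (Ioc (0:ℝ) 1)) :=
    continuous_snd.comp_aestronglyMeasurable hvm
  set ee : ℝ → R2 := fun t => (v' t).1 - η • (XH Hf (v t)).1 with heedef
  set ep : ℝ → R2 := fun t => (v' t).2 - η • (XH Hf (v t)).2 with hepdef
  set aa : ℝ → R2 := fun t => ((v' t).1.1 - η * (v t).1.2, (v' t).1.2 + η * (v t).1.1)
    with haadef
  have heem : AEStronglyMeasurable ee (volume.restrict (Ioc (0:ℝ) 1)) :=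
    hq'm.sub ((aesm_of_contOn _ contXH1v).const_smul η)
  have hepm : AEStronglyMeasurable ep (volume.restrict (Ioc (0:ℝ) 1)) :=
    hp'm.sub ((aesm_of_contOn _ contXH2v).const_smul η)
  have haam : AEStronglyMeasurable aa (volume.restrict (Ioc (0:ℝ) 1)) := by
    apply AEStronglyMeasurable.prodMk
    · exact ((continuous_fst.comp continuous_fst).comp_aestronglyMeasurable hvm).sub
        (aesm_of_contOn _ (continuousOn_const.mul
          ((continuous_snd.comp continuous_fst).comp_continuousOn contv)))
    · exact ((continuous_snd.comp continuous_fst).comp_aestronglyMeasurable hvm).add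
        (aesm_of_contOn _ (continuousOn_const.mul
          ((continuous_fst.comp continuous_fst).comp_continuousOn contv)))
  -- integrability package
  have hq'2II : IntervalIntegrable (fun t => sq2 (v' t).1) volume 0 1 :=
    II_of_bound _ _ (continuous_sq2.comp_aestronglyMeasurable hq'm) hL2
      (fun t _ => by rw [abs_of_nonneg (sq2_nonneg _)]; linarith [sq2_nonneg (v' t).2])
  have hp'2II : IntervalIntegrable (fun t => sq2 (v' t).2) volume 0 1 :=
    II_of_bound _ _ (continuous_sq2.comp_aestronglyMeasurable hp'm) hL2
      (fun t _ => by rw [abs_of_nonneg (sq2_nonneg _)]; linarith [sq2_nonneg (v' t).1])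
  have hXH1sqII : IntervalIntegrable (fun t => sq2 ((XH Hf (v t)).1)) volume 0 1 :=
    II_of_contOn _ (continuous_sq2.comp_continuousOn contXH1v)
  have hXH2sqII : IntervalIntegrable (fun t => sq2 ((XH Hf (v t)).2)) volume 0 1 :=
    II_of_contOn _ (continuous_sq2.comp_continuousOn contXH2v)
  have heeII : IntervalIntegrable (fun t => sq2 (ee t)) volume 0 1 := by
    apply II_of_bound _ (fun t => 2 * sq2 (v' t).1 + (2*η^2) * sq2 ((XH Hf (v t)).1))
      (continuous_sq2.comp_aestronglyMeasurable heem)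
      ((hq'2II.const_mul 2).add (hXH1sqII.const_mul (2*η^2)))
    intro t _
    rw [abs_of_nonneg (sq2_nonneg _), heedef]
    have h1 := sq2_sub_le ((v' t).1) (η • (XH Hf (v t)).1)
    rw [sq2_smul] at h1
    simp only []
    linarith
  have hepII : IntervalIntegrable (fun t => sq2 (ep t)) volume 0 1 := by
    apply II_of_bound _ (fun t => 2 * sq2 (v' t).2 + (2*η^2) * sq2 ((XH Hf (v t)).2))
      (continuous_sq2.comp_aestronglyMeasurable hepm)
      ((hp'2II.const_mul 2).add (hXH2sqII.const_mul (2*η^2)))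
    intro t _
    rw [abs_of_nonneg (sq2_nonneg _), hepdef]
    have h1 := sq2_sub_le ((v' t).2) (η • (XH Hf (v t)).2)
    rw [sq2_smul] at h1
    simp only []
    linarith
  -- gradient smallness
  set Ie := ∫ t in (0:ℝ)..1, sq2 (ee t) with hIedef
  have hIe0 : 0 ≤ Ie :=
    intervalIntegral.integral_nonneg zero_le_one (fun t _ => sq2_nonneg _)
  have hIfull0 : 0 ≤ ∫ t in (0:ℝ)..1, (sq2 (ee t) + sq2 (ep t)) :=
    intervalIntegral.integral_nonneg zero_le_one
      (fun t _ => add_nonneg (sq2_nonneg _) (sq2_nonneg _))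
  have hIfull_lt : (∫ t in (0:ℝ)..1, (sq2 (ee t) + sq2 (ep t))) < ε ^ 2 := by
    have h1 : gradSq Hf v v' η
        = (∫ t in (0:ℝ)..1, (sq2 (ee t) + sq2 (ep t)))
          + (∫ t in (0:ℝ)..1, Hf (v t)) ^ 2 := rfl
    have h2 : (∫ t in (0:ℝ)..1, (sq2 (ee t) + sq2 (ep t))) ≤ gradSq Hf v v' η := by
      rw [h1]; nlinarith [sq_nonneg (∫ t in (0:ℝ)..1, Hf (v t))]
    have h3 := (Real.sqrt_le_sqrt h2).trans_lt hgrad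
    nlinarith [Real.sq_sqrt hIfull0,
      Real.sqrt_nonneg (∫ t in (0:ℝ)..1, (sq2 (ee t) + sq2 (ep t)))]
  have hIe_lt : Ie < ε ^ 2 := by
    have h1 : Ie ≤ ∫ t in (0:ℝ)..1, (sq2 (ee t) + sq2 (ep t)) := by
      rw [hIedef]
      exact intervalIntegral.integral_mono_on zero_le_one heeII (heeII.add hepII)
        (fun t _ => by linarith [sq2_nonneg (ep t)])
    linarith
  have hsqIe : Real.sqrt Ie ≤ ε := by
    have := Real.sqrt_le_sqrt hIe_lt.le
    rwa [Real.sqrt_sq hε.le] at this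
  -- quantities
  set P2 := ∫ t in (0:ℝ)..1, sq2 (v t).2 with hP2def
  have hp2II : IntervalIntegrable (fun t => sq2 (v t).2) volume 0 1 :=
    II_of_contOn _ (continuous_sq2.comp_continuousOn contp)
  have hP20 : 0 ≤ P2 :=
    intervalIntegral.integral_nonneg zero_le_one (fun t _ => sq2_nonneg _)
  set X := Real.sqrt P2 with hXdef
  have hX2 : X ^ 2 = P2 := Real.sq_sqrt hP20
  set gph : Phase → ℝ := fun x => h x - fderiv ℝ h x ((0,0), x.2) with hgphdef
  have hgph_ge : ∀ x, c ≤ gph x := by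
    intro x
    rw [hc]
    exact csInf_le ⟨0, by rintro y ⟨z, rfl⟩; exact (hLiou z).le⟩ ⟨x, rfl⟩
  have hgphc : Continuous gph := by
    rw [hgphdef]
    exact hhc.sub (hfc.clm_apply (continuous_const.prodMk continuous_snd))
  have hgII : IntervalIntegrable (fun t => gph (v t)) volume 0 1 :=
    II_of_contOn _ (hgphc.comp_continuousOn contv)
  set G := ∫ t in (0:ℝ)..1, gph (v t) with hGdef
  have hGc : c ≤ G := by
    calc c = ∫ _t in (0:ℝ)..1, c := by simp
      _ ≤ G := intervalIntegral.integral_mono_on zero_le_one intervalIntegrable_const hgII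
          (fun t _ => hgph_ge (v t))
  have hH0c : Continuous H0 := by unfold H0; fun_prop
  have hHfII : IntervalIntegrable (fun t => Hf (v t)) volume 0 1 :=
    II_of_contOn _ ((hH0c.sub hhc).comp_continuousOn contv)
  -- integrability of products
  have heinner_m : AEStronglyMeasurable (fun t => inner2 (v t).2 (ee t))
      (volume.restrict (Ioc (0:ℝ) 1)) := by
    apply AEStronglyMeasurable.add
    · exact ((aesm_of_contOn _ ((continuous_fst.comp continuous_snd).comp_continuousOn
        contv))).mul (continuous_fst.comp_aestronglyMeasurable heem)
    · exact ((aesm_of_contOn _ ((continuous_snd.comp continuous_snd).comp_continuousOn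
        contv))).mul (continuous_snd.comp_aestronglyMeasurable heem)
  have hinnerII : IntervalIntegrable (fun t => inner2 (v t).2 (ee t)) volume 0 1 :=
    II_of_bound _ (fun t => (sq2 (v t).2 + sq2 (ee t)) / 2) heinner_m
      ((hp2II.add heeII).div_const 2) (fun t _ => abs_inner2_le_sq2 _ _)
  have habsinnerII : IntervalIntegrable (fun t => |inner2 (v t).2 (ee t)|) volume 0 1 :=
    hinnerII.abs
  have hprodII : IntervalIntegrable (fun t => enorm2 ((v t).2) * enorm2 (ee t)) volume 0 1 := by
    apply II_of_bound _ (fun t => (sq2 (v t).2 + sq2 (ee t)) / 2)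
      ((aesm_of_contOn _ (continuous_enorm2.comp_continuousOn contp)).mul
        (continuous_enorm2.comp_aestronglyMeasurable heem))
      ((hp2II.add heeII).div_const 2)
    intro t _
    show |enorm2 ((v t).2) * enorm2 (ee t)| ≤ (sq2 ((v t).2) + sq2 (ee t)) / 2
    rw [abs_of_nonneg (mul_nonneg (enorm2_nonneg _) (enorm2_nonneg _))]
    exact enorm2_mul_le_sq2 _ _
  -- linearity of dh in p directions
  have hlinp : ∀ x : Phase, fderiv ℝ h x ((0,0), x.2) = x.2.1 * d3 x + x.2.2 * d4 x := by
    intro x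
    have hw : ((((0:ℝ),(0:ℝ)) : R2), x.2)
        = x.2.1 • ((((0:ℝ),(0:ℝ)) : R2), ((1:ℝ),(0:ℝ)))
          + x.2.2 • ((((0:ℝ),(0:ℝ)) : R2), ((0:ℝ),(1:ℝ))) := by
      simp [Prod.ext_iff, Prod.smul_fst, Prod.smul_snd, smul_eq_mul]
    rw [hw, map_add, ContinuousLinearMap.map_smul, ContinuousLinearMap.map_smul, hd3def, hd4def]
    simp [smul_eq_mul]
  -- pointwise action identity
  have hptA : ∀ t, inner2 (v t).2 (v' t).1
      = inner2 (v t).2 (ee t) + η * (Hf (v t) + sq2 (v t).2 / 2 + gph (v t)) := by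
    intro t
    have h1 : (v' t).1 = ee t + η • (XH Hf (v t)).1 := by simp only [heedef]; abel
    rw [h1, hXHF (v t)]
    simp only [hFdef, hgphdef, hHf, H0, sq2, inner2, Prod.fst_add, Prod.snd_add,
      Prod.smul_fst, Prod.smul_snd, smul_eq_mul, hlinp (v t)]
    ring
  -- split the action integral
  have hsplit : (∫ t in (0:ℝ)..1, inner2 (v t).2 (v' t).1)
      = (∫ t in (0:ℝ)..1, inner2 (v t).2 (ee t))
        + η * ((∫ t in (0:ℝ)..1, Hf (v t)) + P2 / 2 + G) := by
    rw [show (fun t => inner2 (v t).2 (v' t).1)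
        = fun t => inner2 (v t).2 (ee t) + η * (Hf (v t) + sq2 (v t).2 / 2 + gph (v t))
        from funext hptA]
    rw [intervalIntegral.integral_add hinnerII
      (((hHfII.add (hp2II.div_const 2)).add hgII).const_mul η),
      intervalIntegral.integral_const_mul,
      intervalIntegral.integral_add (hHfII.add (hp2II.div_const 2)) hgII,
      intervalIntegral.integral_add hHfII (hp2II.div_const 2),
      intervalIntegral.integral_div]
  set E := ∫ t in (0:ℝ)..1, inner2 (v t).2 (ee t) with hEdef
  have hactId : action Hf v v' η = E + η * (P2 / 2 + G) := by
    show (∫ t in (0:ℝ)..1, inner2 (v t).2 (v' t).1)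
      - η * ∫ t in (0:ℝ)..1, Hf (v t) = E + η * (P2 / 2 + G)
    rw [hsplit]; ring
  have hEabs : |E| ≤ X * Real.sqrt Ie := by
    have hsq_p : (fun t => (enorm2 ((v t).2)) ^ 2) = fun t => sq2 (v t).2 :=
      funext fun t => sq_enorm2 _
    have hsq_e : (fun t => (enorm2 (ee t)) ^ 2) = fun t => sq2 (ee t) :=
      funext fun t => sq_enorm2 _
    calc |E| ≤ ∫ t in (0:ℝ)..1, |inner2 (v t).2 (ee t)| := by
          rw [hEdef]; exact intervalIntegral.abs_integral_le_integral_abs zero_le_one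
      _ ≤ ∫ t in (0:ℝ)..1, enorm2 ((v t).2) * enorm2 (ee t) :=
          intervalIntegral.integral_mono_on zero_le_one habsinnerII hprodII
            (fun t _ => abs_inner2_le _ _)
      _ ≤ Real.sqrt (∫ t in (0:ℝ)..1, (enorm2 ((v t).2)) ^ 2)
            * Real.sqrt (∫ t in (0:ℝ)..1, (enorm2 (ee t)) ^ 2) := by
          apply integral_CS _ _ hprodII
          · rw [hsq_p]; exact hp2II
          · rw [hsq_e]; exact heeII
      _ = X * Real.sqrt Ie := by rw [hsq_p, hsq_e]
  -- the key estimate |η| X ≤ 2 ε + A / √(2c)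
  have hPG : 0 < P2 / 2 + G := by linarith
  have hE1 : |η| * (X ^ 2 / 2 + c) ≤ A + X * ε := by
    have h1 : |η * (P2 / 2 + G)| = |η| * (P2 / 2 + G) := by rw [abs_mul, abs_of_pos hPG]
    have h2 : η * (P2 / 2 + G) = action Hf v v' η - E := by rw [hactId]; ring
    have h3 : |η| * (P2 / 2 + G) ≤ A + |E| := by
      rw [← h1, h2]
      calc |action Hf v v' η - E| ≤ |action Hf v v' η| + |E| := by
            rw [sub_eq_add_neg]
            exact (abs_add_le _ _).trans_eq (by rw [abs_neg])
        _ ≤ A + |E| := by linarith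
    have h4 : X * Real.sqrt Ie ≤ X * ε := mul_le_mul_of_nonneg_left hsqIe (Real.sqrt_nonneg _)
    have h5 : |η| * (X ^ 2 / 2 + c) ≤ |η| * (P2 / 2 + G) := by
      rw [hX2]
      exact mul_le_mul_of_nonneg_left (by linarith) (abs_nonneg η)
    linarith [hEabs]
  set s := Real.sqrt (2 * c) with hsdef
  have hs0 : 0 < s := Real.sqrt_pos.mpr (by linarith)
  have hs2 : s ^ 2 = 2 * c := Real.sq_sqrt (by linarith)
  have hukey : |η| * X ≤ 2 * ε + A / s := by
    by_contra hcon
    push_neg at hcon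
    have hB0 : 0 < A / s := div_pos hA hs0
    have hX0 : 0 < X := by
      by_contra hx
      push_neg at hx
      have hx0 : X = 0 := le_antisymm hx (Real.sqrt_nonneg P2)
      rw [hx0, mul_zero] at hcon
      linarith
    have hAB : A = A / s * s := by field_simp
    have h2 : 2 * ε * X + A / s * X < |η| * X ^ 2 := by
      nlinarith [mul_lt_mul_of_pos_right hcon hX0]
    have h3 : |η| * X ^ 2 + 2 * (|η| * c) ≤ 2 * A + 2 * ε * X := by nlinarith [hE1]
    have h4 : A / s * X + 2 * (|η| * c) < 2 * (A / s) * s := by nlinarith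
    have h5 : A / s < |η| * X := by nlinarith
    have h6 : A / s * X ^ 2 + 2 * (|η| * X * c) < 2 * (A / s) * s * X := by nlinarith
    have h7 : A / s * X ^ 2 + 2 * (A / s * c) < 2 * (A / s) * s * X := by
      nlinarith [mul_lt_mul_of_pos_right h5 hcpos]
    nlinarith [sq_nonneg (X - s), hB0, hs2]
  -- sup of gnorm
  set S := sSup (Set.range (gnorm h)) with hSdef
  have hgn_cont : Continuous (gnorm h) := by
    apply Real.continuous_sqrt.comp
    exact ((((hcd _).pow 2).add ((hcd _).pow 2)).add ((hcd _).pow 2)).add ((hcd _).pow 2)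
  have hgn_supp : HasCompactSupport (gnorm h) := by
    have he : gnorm h = (fun L : Phase →L[ℝ] ℝ => Real.sqrt ((L ((1,0),(0,0))) ^ 2
        + (L ((0,1),(0,0))) ^ 2 + (L ((0,0),(1,0))) ^ 2 + (L ((0,0),(0,1))) ^ 2))
        ∘ (fun x => fderiv ℝ h x) := rfl
    rw [he]
    exact hsupp.comp_left (by simp)
  have hbdd : BddAbove (Set.range (gnorm h)) := by
    obtain ⟨C, hC⟩ := hgn_supp.exists_bound_of_continuous hgn_cont
    refine ⟨C, ?_⟩
    rintro y ⟨x, rfl⟩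
    exact (le_abs_self _).trans (by simpa [Real.norm_eq_abs] using hC x)
  have hgnS : ∀ x, gnorm h x ≤ S := fun x => le_csSup hbdd ⟨x, rfl⟩
  have hS0 : 0 ≤ S := le_trans (Real.sqrt_nonneg _) (hgnS ((0,0),(0,0)))
  have hgradS : ∀ x : Phase, enorm2 (d3 x, d4 x) ≤ S := by
    intro x
    have hb : sq2 (d3 x, d4 x) ≤ d1 x ^ 2 + d2 x ^ 2 + d3 x ^ 2 + d4 x ^ 2 :=
      sq2_pair_le_four (d1 x) (d2 x) (d3 x) (d4 x)
    have h2 : enorm2 (d3 x, d4 x) ≤ Real.sqrt (d1 x ^ 2 + d2 x ^ 2 + d3 x ^ 2 + d4 x ^ 2) :=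
      Real.sqrt_le_sqrt hb
    have h3 : Real.sqrt (d1 x ^ 2 + d2 x ^ 2 + d3 x ^ 2 + d4 x ^ 2) = gnorm h x := rfl
    exact le_trans h2 (le_trans (le_of_eq h3) (hgnS x))
  -- decomposition of aa
  have haadec : ∀ t, aa t = (ee t + η • (v t).2) + (-η) • (d3 (v t), d4 (v t)) := by
    intro t
    simp only [haadef, heedef, hXHF (v t), hFdef, Prod.ext_iff, Prod.fst_add, Prod.snd_add,
      Prod.fst_sub, Prod.snd_sub, Prod.smul_fst, Prod.smul_snd, smul_eq_mul]
    constructor <;> ring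
  have haa_pt : ∀ t, enorm2 (aa t)
      ≤ enorm2 (ee t) + |η| * enorm2 ((v t).2) + |η| * enorm2 (d3 (v t), d4 (v t)) := by
    intro t
    rw [haadec t]
    refine le_trans (enorm2_add_le _ _) ?_
    have h1 := enorm2_add_le (ee t) (η • (v t).2)
    rw [enorm2_smul] at h1
    have h2 : enorm2 ((-η) • ((d3 (v t), d4 (v t)) : R2)) = |η| * enorm2 (d3 (v t), d4 (v t)) := by
      rw [enorm2_smul, abs_neg]
    rw [h2]
    linarith
  -- more integrability
  have haa2II : IntervalIntegrable (fun t => sq2 (aa t)) volume 0 1 := by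
    apply II_of_bound _ (fun t => 2 * sq2 (v' t).1 + (2 * η ^ 2) * sq2 (v t).1)
      (continuous_sq2.comp_aestronglyMeasurable haam)
      ((hq'2II.const_mul 2).add
        ((II_of_contOn _ (continuous_sq2.comp_continuousOn contq)).const_mul _))
    intro t _
    have hb := sq2_rot_bound ((v' t).1.1) ((v' t).1.2) ((v t).1.1) ((v t).1.2) η
    rw [abs_of_nonneg (sq2_nonneg _)]
    simp only [haadef]
    exact hb
  have henaaII : IntervalIntegrable (fun t => enorm2 (aa t)) volume 0 1 :=
    II_of_bound _ (fun t => (1 + sq2 (aa t)) / 2)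
      (continuous_enorm2.comp_aestronglyMeasurable haam)
      ((intervalIntegrable_const.add haa2II).div_const 2)
      (fun t _ => by rw [abs_of_nonneg (enorm2_nonneg _)]; exact enorm2_le_half _)
  have heneeII : IntervalIntegrable (fun t => enorm2 (ee t)) volume 0 1 :=
    II_of_bound _ (fun t => (1 + sq2 (ee t)) / 2)
      (continuous_enorm2.comp_aestronglyMeasurable heem)
      ((intervalIntegrable_const.add heeII).div_const 2)
      (fun t _ => by rw [abs_of_nonneg (enorm2_nonneg _)]; exact enorm2_le_half _)
  have henpII : IntervalIntegrable (fun t => enorm2 ((v t).2)) volume 0 1 :=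
    II_of_contOn _ (continuous_enorm2.comp_continuousOn contp)
  have hgradvII : IntervalIntegrable (fun t => enorm2 (d3 (v t), d4 (v t))) volume 0 1 :=
    II_of_contOn _ ((continuous_enorm2.comp (hc3c.prodMk hc4c)).comp_continuousOn contv)
  -- the big integral bound
  set N := ∫ u in (0:ℝ)..1, enorm2 (aa u) with hNdef
  have hN0 : 0 ≤ N :=
    intervalIntegral.integral_nonneg zero_le_one (fun u _ => enorm2_nonneg _)
  have hNbound : N ≤ 3 * ε + A / s + Y * S := by
    have hmono : N ≤ ∫ t in (0:ℝ)..1, (enorm2 (ee t) + |η| * enorm2 ((v t).2)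
        + |η| * enorm2 (d3 (v t), d4 (v t))) := by
      rw [hNdef]
      exact intervalIntegral.integral_mono_on zero_le_one henaaII
        ((heneeII.add (henpII.const_mul _)).add (hgradvII.const_mul _))
        (fun t _ => haa_pt t)
    rw [intervalIntegral.integral_add (heneeII.add (henpII.const_mul _))
        (hgradvII.const_mul _),
      intervalIntegral.integral_add heneeII (henpII.const_mul _),
      intervalIntegral.integral_const_mul, intervalIntegral.integral_const_mul] at hmono
    have hB1 : (∫ t in (0:ℝ)..1, enorm2 (ee t)) ≤ ε := by
      have hsq_e : (fun t => (enorm2 (ee t)) ^ 2) = fun t => sq2 (ee t) :=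
        funext fun t => sq_enorm2 _
      have h1 := L1_le_L2 (fun t => enorm2 (ee t)) heneeII (by rw [hsq_e]; exact heeII)
      calc (∫ t in (0:ℝ)..1, enorm2 (ee t))
          ≤ Real.sqrt (∫ t in (0:ℝ)..1, (enorm2 (ee t)) ^ 2) := h1
        _ = Real.sqrt Ie := by rw [hsq_e]
        _ ≤ ε := hsqIe
    have hB2 : |η| * (∫ t in (0:ℝ)..1, enorm2 ((v t).2)) ≤ 2 * ε + A / s := by
      have hsq_p : (fun t => (enorm2 ((v t).2)) ^ 2) = fun t => sq2 (v t).2 :=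
        funext fun t => sq_enorm2 _
      have h1 : (∫ t in (0:ℝ)..1, enorm2 ((v t).2)) ≤ X := by
        have := L1_le_L2 (fun t => enorm2 ((v t).2)) henpII (by rw [hsq_p]; exact hp2II)
        calc (∫ t in (0:ℝ)..1, enorm2 ((v t).2))
            ≤ Real.sqrt (∫ t in (0:ℝ)..1, (enorm2 ((v t).2)) ^ 2) := this
          _ = X := by rw [hsq_p]
      calc |η| * (∫ t in (0:ℝ)..1, enorm2 ((v t).2))
          ≤ |η| * X := mul_le_mul_of_nonneg_left h1 (abs_nonneg η)
        _ ≤ 2 * ε + A / s := hukey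
    have hB3 : |η| * (∫ t in (0:ℝ)..1, enorm2 (d3 (v t), d4 (v t))) ≤ Y * S := by
      have h1 : (∫ t in (0:ℝ)..1, enorm2 (d3 (v t), d4 (v t))) ≤ S := by
        calc (∫ t in (0:ℝ)..1, enorm2 (d3 (v t), d4 (v t)))
            ≤ ∫ _t in (0:ℝ)..1, S := intervalIntegral.integral_mono_on zero_le_one
              hgradvII intervalIntegrable_const (fun t _ => hgradS (v t))
          _ = S := by simp
      have h2 : 0 ≤ ∫ t in (0:ℝ)..1, enorm2 (d3 (v t), d4 (v t)) :=
        intervalIntegral.integral_nonneg zero_le_one (fun t _ => enorm2_nonneg _)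
      exact mul_le_mul hη h1 h2 hY.le
    linarith
  clear_value Hf d1 d2 d3 d4 F ee ep aa gph Ie P2 X G E s S
  -- rotated path and FTC
  set Q1 : ℝ → ℝ := fun u => Real.cos (-η*u) * (v u).1.1 + Real.sin (-η*u) * (v u).1.2
    with hQ1def
  set Q2 : ℝ → ℝ := fun u => -Real.sin (-η*u) * (v u).1.1 + Real.cos (-η*u) * (v u).1.2
    with hQ2def
  set W1 : ℝ → ℝ := fun u => Real.cos (-η*u) * (aa u).1 + Real.sin (-η*u) * (aa u).2
    with hW1def
  set W2 : ℝ → ℝ := fun u => -Real.sin (-η*u) * (aa u).1 + Real.cos (-η*u) * (aa u).2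
    with hW2def
  have hvq1d : ∀ u ∈ Icc (0:ℝ) 1,
      HasDerivWithinAt (fun r => (v r).1.1) ((v' u).1.1) (Icc (0:ℝ) 1) u :=
    fun u hu => Pq1.hasFDerivAt.comp_hasDerivWithinAt u (hd u hu)
  have hvq2d : ∀ u ∈ Icc (0:ℝ) 1,
      HasDerivWithinAt (fun r => (v r).1.2) ((v' u).1.2) (Icc (0:ℝ) 1) u :=
    fun u hu => Pq2.hasFDerivAt.comp_hasDerivWithinAt u (hd u hu)
  have hQ1d : ∀ u ∈ Icc (0:ℝ) 1, HasDerivWithinAt Q1 (W1 u) (Icc (0:ℝ) 1) u := by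
    intro u hu
    have hθ := (hasDerivAt_id u).const_mul (-η)
    have hco := hθ.cos
    have hsi := hθ.sin
    have hres := (hco.hasDerivWithinAt.mul (hvq1d u hu)).add
      (hsi.hasDerivWithinAt.mul (hvq2d u hu))
    rw [hQ1def]
    refine hres.congr_deriv ?_
    simp only [hW1def, haadef, id_eq]
    ring
  have hQ2d : ∀ u ∈ Icc (0:ℝ) 1, HasDerivWithinAt Q2 (W2 u) (Icc (0:ℝ) 1) u := by
    intro u hu
    have hθ := (hasDerivAt_id u).const_mul (-η)
    have hco := hθ.cos
    have hsi := hθ.sin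
    have hnsi := hsi.neg
    have hres := (hnsi.hasDerivWithinAt.mul (hvq1d u hu)).add
      (hco.hasDerivWithinAt.mul (hvq2d u hu))
    rw [hQ2def]
    refine hres.congr_deriv ?_
    simp only [hW2def, haadef, id_eq, Pi.neg_apply]
    ring
  have hcossin1 : ∀ u : ℝ, enorm2 (Real.cos (-η*u), Real.sin (-η*u)) = 1 := by
    intro u
    rw [enorm2]
    simp only [sq2]
    rw [Real.cos_sq_add_sin_sq, Real.sqrt_one]
  have hW1II : IntervalIntegrable W1 volume 0 1 := by
    apply II_of_bound _ (fun t => enorm2 (aa t)) ?_ henaaII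
    · intro t _
      have h1 := abs_inner2_le (Real.cos (-η*t), Real.sin (-η*t)) (aa t)
      rw [hcossin1 t, one_mul] at h1
      calc |W1 t| = |inner2 (Real.cos (-η*t), Real.sin (-η*t)) (aa t)| := by
            rw [hW1def]; simp [inner2]
        _ ≤ enorm2 (aa t) := h1
    · apply AEStronglyMeasurable.add
      · exact ((Real.continuous_cos.comp (continuous_const.mul continuous_id)).aestronglyMeasurable).mul
          (continuous_fst.comp_aestronglyMeasurable haam)
      · exact ((Real.continuous_sin.comp (continuous_const.mul continuous_id)).aestronglyMeasurable).mul
          (continuous_snd.comp_aestronglyMeasurable haam)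
  have hW2II : IntervalIntegrable W2 volume 0 1 := by
    apply II_of_bound _ (fun t => enorm2 (aa t)) ?_ henaaII
    · intro t _
      have h1 := abs_inner2_le (-Real.sin (-η*t), Real.cos (-η*t)) (aa t)
      have h2 : enorm2 (-Real.sin (-η*t), Real.cos (-η*t)) = 1 := by
        rw [enorm2]
        simp only [sq2]
        rw [show (-Real.sin (-η*t))^2 = Real.sin (-η*t)^2 by ring]
        rw [Real.sin_sq_add_cos_sq, Real.sqrt_one]
      rw [h2, one_mul] at h1
      calc |W2 t| = |inner2 (-Real.sin (-η*t), Real.cos (-η*t)) (aa t)| := by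
            rw [hW2def]; simp [inner2]
        _ ≤ enorm2 (aa t) := h1
    · apply AEStronglyMeasurable.add
      · exact (((Real.continuous_sin.comp (continuous_const.mul continuous_id)).neg).aestronglyMeasurable).mul
          (continuous_fst.comp_aestronglyMeasurable haam)
      · exact ((Real.continuous_cos.comp (continuous_const.mul continuous_id)).aestronglyMeasurable).mul
          (continuous_snd.comp_aestronglyMeasurable haam)
  have hfinal : ∀ t ∈ Icc (0:ℝ) 1,
      enorm2 (v t).1 ≤ min (enorm2 q0) (enorm2 q1) + N := by
    intro t ht
    have hms1 : ∀ f : ℝ → ℝ, IntervalIntegrable f volume 0 1 →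
        IntervalIntegrable f volume 0 t := fun f hf => hf.mono_set (by
      rw [uIcc_of_le ht.1, uIcc_of_le zero_le_one]
      exact Icc_subset_Icc le_rfl ht.2)
    have hms2 : ∀ f : ℝ → ℝ, IntervalIntegrable f volume 0 1 →
        IntervalIntegrable f volume t 1 := fun f hf => hf.mono_set (by
      rw [uIcc_of_le ht.2, uIcc_of_le zero_le_one]
      exact Icc_subset_Icc ht.1 le_rfl)
    obtain ⟨hft1a, hft1b⟩ := ftc_aux Q1 W1 hQ1d hW1II t ht
    obtain ⟨hft2a, hft2b⟩ := ftc_aux Q2 W2 hQ2d hW2II t ht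
    have hrot : ∀ u : ℝ, enorm2 (Q1 u, Q2 u) = enorm2 ((v u).1) := by
      intro u
      rw [hQ1def, hQ2def, enorm2, enorm2]
      exact congrArg Real.sqrt (rot_sq2 (-η*u) ((v u).1))
    have hWn : ∀ u : ℝ, enorm2 (W1 u, W2 u) = enorm2 (aa u) := by
      intro u
      rw [hW1def, hW2def, enorm2, enorm2]
      exact congrArg Real.sqrt (rot_sq2 (-η*u) (aa u))
    have hWn_fun : (fun u => enorm2 (W1 u, W2 u)) = fun u => enorm2 (aa u) := funext hWn
    have hsplitN : (∫ u in (0:ℝ)..t, enorm2 (aa u)) + (∫ u in t..(1:ℝ), enorm2 (aa u)) = N :=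
      intervalIntegral.integral_add_adjacent_intervals
        (hms1 _ henaaII) (hms2 _ henaaII)
    have hpos1 : 0 ≤ ∫ u in (0:ℝ)..t, enorm2 (aa u) :=
      intervalIntegral.integral_nonneg ht.1 (fun u _ => enorm2_nonneg _)
    have hpos2 : 0 ≤ ∫ u in t..(1:ℝ), enorm2 (aa u) :=
      intervalIntegral.integral_nonneg ht.2 (fun u _ => enorm2_nonneg _)
    have hQ00 : enorm2 (Q1 0, Q2 0) = enorm2 q0 := by
      rw [hQ1def, hQ2def]
      simp only [mul_zero, neg_zero, Real.cos_zero, Real.sin_zero, one_mul, zero_mul,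
        add_zero, zero_add, neg_mul]
      rw [show ((v 0).1.1, (v 0).1.2) = (v 0).1 from rfl, hq0]
    have hQ11 : enorm2 (Q1 1, Q2 1) = enorm2 q1 := by
      rw [hrot 1, hq1]
    have hb1 : enorm2 ((v t).1) ≤ enorm2 q0 + N := by
      have heq : ((Q1 t, Q2 t) : R2)
          = (Q1 0, Q2 0) + (∫ u in (0:ℝ)..t, W1 u, ∫ u in (0:ℝ)..t, W2 u) := by
        simp only [Prod.ext_iff, Prod.fst_add, Prod.snd_add]
        constructor <;> [linarith [hft1a]; linarith [hft2a]]
      calc enorm2 ((v t).1) = enorm2 (Q1 t, Q2 t) := (hrot t).symm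
        _ ≤ enorm2 (Q1 0, Q2 0)
            + enorm2 (∫ u in (0:ℝ)..t, W1 u, ∫ u in (0:ℝ)..t, W2 u) := by
            rw [heq]; exact enorm2_add_le _ _
        _ ≤ enorm2 q0 + ∫ u in (0:ℝ)..t, enorm2 (W1 u, W2 u) := by
            rw [hQ00]
            have := enorm2_pair_integral_le 0 t ht.1 W1 W2 (hms1 _ hW1II) (hms1 _ hW2II)
              (by rw [hWn_fun]; exact hms1 _ henaaII)
            linarith
        _ = enorm2 q0 + ∫ u in (0:ℝ)..t, enorm2 (aa u) := by rw [hWn_fun]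
        _ ≤ enorm2 q0 + N := by linarith
    have hb2 : enorm2 ((v t).1) ≤ enorm2 q1 + N := by
      have heq : ((Q1 t, Q2 t) : R2)
          = (Q1 1, Q2 1) + (-(∫ u in t..(1:ℝ), W1 u), -(∫ u in t..(1:ℝ), W2 u)) := by
        simp only [Prod.ext_iff, Prod.fst_add, Prod.snd_add]
        constructor <;> [linarith [hft1b]; linarith [hft2b]]
      calc enorm2 ((v t).1) = enorm2 (Q1 t, Q2 t) := (hrot t).symm
        _ ≤ enorm2 (Q1 1, Q2 1)
            + enorm2 (-(∫ u in t..(1:ℝ), W1 u), -(∫ u in t..(1:ℝ), W2 u)) := by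
            rw [heq]; exact enorm2_add_le _ _
        _ = enorm2 q1 + enorm2 (∫ u in t..(1:ℝ), W1 u, ∫ u in t..(1:ℝ), W2 u) := by
            rw [hQ11, enorm2_neg_pair]
        _ ≤ enorm2 q1 + ∫ u in t..(1:ℝ), enorm2 (W1 u, W2 u) := by
            have := enorm2_pair_integral_le t 1 ht.2 W1 W2 (hms2 _ hW1II) (hms2 _ hW2II)
              (by rw [hWn_fun]; exact hms2 _ henaaII)
            linarith
        _ = enorm2 q1 + ∫ u in t..(1:ℝ), enorm2 (aa u) := by rw [hWn_fun]
        _ ≤ enorm2 q1 + N := by linarith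
    rcases le_total (enorm2 q0) (enorm2 q1) with hmin | hmin
    · rw [min_eq_left hmin]; exact hb1
    · rw [min_eq_right hmin]; exact hb2
  have hK0 : 0 ≤ 3 * ε + A / s + Y * S := by
    have h1 := div_nonneg hA.le hs0.le
    have h2 := mul_nonneg hY.le hS0
    linarith
  have hfinal2 : ∀ t ∈ Icc (0:ℝ) 1,
      enorm2 (v t).1 ≤ min (enorm2 q0) (enorm2 q1) + 2 * (3 * ε + A / s + Y * S) :=
    fun t ht => le_trans (hfinal t ht) (by linarith [hNbound])
  refine ⟨?_, hfinal2⟩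
  have hM0 : 0 ≤ min (enorm2 q0) (enorm2 q1) + 2 * (3 * ε + A / s + Y * S) :=
    add_nonneg (le_min (enorm2_nonneg _) (enorm2_nonneg _)) (by linarith)
  have hq2II : IntervalIntegrable (fun t => sq2 (v t).1) volume 0 1 :=
    II_of_contOn _ (continuous_sq2.comp_continuousOn contq)
  have hint : (∫ t in (0:ℝ)..1, sq2 (v t).1)
      ≤ (min (enorm2 q0) (enorm2 q1) + 2 * (3 * ε + A / s + Y * S)) ^ 2 := by
    calc (∫ t in (0:ℝ)..1, sq2 (v t).1)
        ≤ ∫ _t in (0:ℝ)..1, (min (enorm2 q0) (enorm2 q1)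
            + 2 * (3 * ε + A / s + Y * S)) ^ 2 :=
          intervalIntegral.integral_mono_on zero_le_one hq2II intervalIntegrable_const
            (fun t ht => by
              rw [← sq_enorm2]
              exact pow_le_pow_left₀ (enorm2_nonneg _) (hfinal2 t ht) 2)
      _ = _ := by simp
  calc Real.sqrt (∫ t in (0:ℝ)..1, sq2 (v t).1)
      ≤ Real.sqrt ((min (enorm2 q0) (enorm2 q1) + 2 * (3 * ε + A / s + Y * S)) ^ 2) :=
        Real.sqrt_le_sqrt hint
    _ = _ := Real.sqrt_sq hM0
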